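/- arXiv:1212.5576 — 2 statements merged into one kernel-verified Lean document; each statement's English description precedes it below -/
import Mathlib

section
/- Proposition 3.1: Let α be a countable ordinal (with a fixed choice of cofinal sequences defining the Schreier family S_α). The unit vector basis (e_n) of the Schreier space X_α satisfies subsequential 2-X_α-upper block estimates in itself: if (x_j) is a sequence of nonzero finitely supported functions x_j : ℕ → ℝ with ‖x_j‖_α = 1 and max supp x_j < min supp x_{j+1} for all j, and m_j = min supp x_j, then ‖Σ a_j x_j‖_α ≤ 2 ‖Σ a_j e_{m_j}‖_α for every finitely supported real sequence (a_j). -/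
open Filter Topology Metric

noncomputable section


/-! ### Schreier families on ℕ+ = {1,2,...} -/

/-- The successor step of the Schreier hierarchy. -/
def schreierSucc (S : Set (Finset ℕ+)) : Set (Finset ℕ+) :=
  insert ∅ {F | ∃ (m : ℕ) (hm : 0 < m) (Es : Fin m → Finset ℕ+),
    (∀ i, Es i ∈ S) ∧ (∀ i, (Es i).Nonempty) ∧
    (∀ i j : Fin m, i < j → ∀ p ∈ Es i, ∀ q ∈ Es j, p < q) ∧
    (∀ p ∈ Es ⟨0, hm⟩, m ≤ (p : ℕ)) ∧
    F = Finset.univ.biUnion Es}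

/-- The Schreier family `S_o`, relative to a choice `c` of cofinal sequences at limit
ordinals. -/
def schreier (c : Ordinal → ℕ+ → Ordinal) (o : Ordinal) : Set (Finset ℕ+) :=
  Ordinal.limitRecOn o
    (insert ∅ {E | ∃ n : ℕ+, E = {n}})
    (fun _ S => schreierSucc S)
    (fun l _ ih =>
      insert ∅ {F | ∃ (n : ℕ+) (h : c l n < l), F ∈ ih (c l n) h ∧ ∀ k ∈ F, n ≤ k})

/-- `c` is a legitimate choice of cofinal sequences: at every countable limit ordinal `o`,
`c o` is a strictly increasing sequence of ordinals below `o` with supremum `o`. -/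
def IsCofinalChoice (c : Ordinal → ℕ+ → Ordinal) : Prop :=
  ∀ o : Ordinal, Order.IsSuccLimit o → o < Ordinal.omega 1 →
    StrictMono (c o) ∧ (∀ n : ℕ+, c o n < o) ∧ ∀ b < o, ∃ n : ℕ+, b ≤ c o n

/-- The Schreier norm `‖x‖_o = sup { Σ_{n ∈ E} |x n| : E ∈ S_o }` of a finitely supported
function. -/
def schreierNorm (c : Ordinal → ℕ+ → Ordinal) (o : Ordinal) (x : ℕ+ →₀ ℝ) : ℝ :=
  sSup {r : ℝ | ∃ E ∈ schreier c o, r = ∑ n ∈ E, |x n|}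

/-- The finitely supported function `Σ_n a_n e_{k n}`. -/
def schreierComb (k : ℕ → ℕ+) (a : ℕ →₀ ℝ) : ℕ+ →₀ ℝ :=
  a.sum fun n r => Finsupp.single (k n) r

/-! Let `E ∈ S_α`. Since `‖x_j‖_α = 1`, each block `x_j` that `E` meets contributes at most
`|a_j|` to `Σ_{n ∈ E} |(Σ a_j x_j)(n)|`. The first such block is paid for by the singleton
`{m_j}`. Every later one is preceded by a block that `E` also meets, so `E` has a point between
any two of the remaining `m_j` and a point below the first of them: the remaining `m_j` form a
spread of a subset of `E`, and `S_α` is hereditary and spreading. -/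

section Schreier

variable {c : Ordinal → ℕ+ → Ordinal}

theorem schreier_zero : schreier c 0 = insert ∅ {E | ∃ n : ℕ+, E = {n}} :=
  Ordinal.limitRecOn_zero _ _ _

theorem schreier_add_one (o : Ordinal) : schreier c (o + 1) = schreierSucc (schreier c o) :=
  Ordinal.limitRecOn_add_one _ _ _ _

theorem schreier_limit {l : Ordinal} (hl : Order.IsSuccLimit l) :
    schreier c l = insert ∅ {F | ∃ (n : ℕ+) (_ : c l n < l),
      F ∈ schreier c (c l n) ∧ ∀ k ∈ F, n ≤ k} :=
  Ordinal.limitRecOn_limit _ _ _ _ hl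

theorem mem_schreier_zero {E : Finset ℕ+} : E ∈ schreier c 0 ↔ E.card ≤ 1 := by
  rw [schreier_zero, Finset.card_le_one_iff_subset_singleton]
  constructor
  · rintro (rfl | ⟨n, rfl⟩)
    exacts [⟨1, Finset.empty_subset _⟩, ⟨n, subset_rfl⟩]
  · rintro ⟨n, hn⟩
    rcases Finset.subset_singleton_iff.mp hn with rfl | rfl
    exacts [Set.mem_insert _ _, Set.mem_insert_of_mem _ ⟨n, rfl⟩]

theorem empty_mem_schreier (o : Ordinal) : ∅ ∈ schreier c o := by
  rcases Ordinal.zero_or_succ_or_isSuccLimit o with rfl | ⟨a, rfl⟩ | h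
  · exact mem_schreier_zero.mpr (by simp)
  · rw [Order.succ_eq_add_one, schreier_add_one]; exact Set.mem_insert _ _
  · rw [schreier_limit h]; exact Set.mem_insert _ _

theorem singleton_mem_schreier (hc : IsCofinalChoice c) {o : Ordinal}
    (ho : o < Ordinal.omega 1) (n : ℕ+) : {n} ∈ schreier c o := by
  induction o using Ordinal.limitRecOn with
  | zero => exact mem_schreier_zero.mpr (by simp)
  | add_one o ih =>
    rw [schreier_add_one]
    right
    exact ⟨1, one_pos, fun _ => {n}, fun _ => ih ((Order.lt_add_one_iff.mpr le_rfl).trans ho),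
      fun _ => Finset.singleton_nonempty n, fun i j hij => absurd hij (by omega),
      fun p _ => p.pos, by simp⟩
  | limit l hl ih =>
    rw [schreier_limit hl]
    have h1 : c l 1 < l := (hc l hl ho).2.1 1
    exact Set.mem_insert_of_mem _ ⟨1, h1, ih _ h1 (h1.trans ho), fun _ _ => one_le⟩

theorem le_of_mem_biUnion_of_le_first {m : ℕ} (hm : 0 < m) {Es : Fin m → Finset ℕ+}
    (hne : ∀ i, (Es i).Nonempty) (hord : ∀ i j : Fin m, i < j → ∀ p ∈ Es i, ∀ q ∈ Es j, p < q)
    (hmin : ∀ p ∈ Es ⟨0, hm⟩, m ≤ (p : ℕ)) :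
    ∀ p ∈ Finset.univ.biUnion Es, m ≤ (p : ℕ) := by
  intro p hp
  obtain ⟨i, -, hpi⟩ := Finset.mem_biUnion.mp hp
  rcases eq_or_ne i ⟨0, hm⟩ with rfl | hi
  · exact hmin p hpi
  · obtain ⟨q, hq⟩ := hne ⟨0, hm⟩
    have h0i : (⟨0, hm⟩ : Fin m) < i := lt_of_le_of_ne (Fin.mk_le_of_le_val (Nat.zero_le _)) hi.symm
    exact (hmin q hq).trans (hord _ _ h0i q hq p hpi).le

/-- Pieces may be empty here: they are discarded before invoking the definition. -/
theorem biUnion_mem_schreierSucc {S : Set (Finset ℕ+)} {m : ℕ} {Es : Fin m → Finset ℕ+}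
    (hS : ∀ i, Es i ∈ S) (hord : ∀ i j : Fin m, i < j → ∀ p ∈ Es i, ∀ q ∈ Es j, p < q)
    (hm : ∀ p ∈ Finset.univ.biUnion Es, m ≤ (p : ℕ)) :
    Finset.univ.biUnion Es ∈ schreierSucc S := by
  set I := Finset.univ.filter fun i => (Es i).Nonempty
  have hI : ∀ i p, p ∈ Es i → i ∈ I := fun i p hp =>
    Finset.mem_filter.mpr ⟨Finset.mem_univ _, p, hp⟩
  rcases I.eq_empty_or_nonempty with hIe | hIne
  · left
    refine Finset.eq_empty_of_forall_notMem fun p hp => ?_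
    obtain ⟨i, -, hpi⟩ := Finset.mem_biUnion.mp hp
    simpa [hIe] using hI i p hpi
  right
  set e := I.orderEmbOfFin rfl
  have he : ∀ k, Es (e k) ⊆ Finset.univ.biUnion Es := fun k =>
    Finset.subset_biUnion_of_mem Es (Finset.mem_univ _)
  refine ⟨I.card, hIne.card_pos, Es ∘ e, fun k => hS _,
    fun k => (Finset.mem_filter.mp (I.orderEmbOfFin_mem rfl k)).2,
    fun k l hkl => hord _ _ (e.strictMono hkl), fun p hp => ?_, ?_⟩
  · exact (Finset.card_le_univ I).trans ((Fintype.card_fin m).symm ▸ hm p (he _ hp))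
  · ext p
    simp only [Finset.mem_biUnion, Finset.mem_univ, true_and, Function.comp_apply]
    refine ⟨fun ⟨i, hpi⟩ => ?_, fun ⟨k, hpk⟩ => ⟨e k, hpk⟩⟩
    obtain ⟨k, hk⟩ : i ∈ Set.range e := by rw [Finset.range_orderEmbOfFin]; exact hI i p hpi
    exact ⟨k, hk ▸ hpi⟩

/-- `S_o` is hereditary and spreading, in one statement: `F` is a spread of the subset
`u '' F` of `E`. -/
theorem mem_schreier_of_strictMonoOn {o : Ordinal} {E F : Finset ℕ+} (hE : E ∈ schreier c o)
    {u : ℕ+ → ℕ+} (hu : StrictMonoOn u F) (hmaps : ∀ q ∈ F, u q ∈ E)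
    (hle : ∀ q ∈ F, u q ≤ q) : F ∈ schreier c o := by
  induction o using Ordinal.limitRecOn generalizing E F with
  | zero =>
    rw [mem_schreier_zero] at hE ⊢
    exact (Finset.card_le_card_of_injOn u hmaps hu.injOn).trans hE
  | add_one o ih =>
    rw [schreier_add_one] at hE ⊢
    rcases hE with rfl | ⟨m, hm, Es, hS, hne, hord, hmin, rfl⟩
    · rw [Finset.eq_empty_of_forall_notMem (s := F) fun q hq => by simpa using hmaps q hq]
      exact Set.mem_insert _ _
    have hEm := le_of_mem_biUnion_of_le_first hm hne hord hmin
    have hF : F = Finset.univ.biUnion fun i => F.filter fun q => u q ∈ Es i := by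
      ext q
      simp only [Finset.mem_biUnion, Finset.mem_univ, true_and, Finset.mem_filter]
      refine ⟨fun hq => ?_, fun ⟨_, hq, _⟩ => hq⟩
      obtain ⟨i, -, hi⟩ := Finset.mem_biUnion.mp (hmaps q hq)
      exact ⟨i, hq, hi⟩
    rw [hF]
    refine biUnion_mem_schreierSucc (fun i => ?_) ?_ ?_
    · exact ih (hS i) (hu.mono (Finset.filter_subset _ _)) (fun q hq => (Finset.mem_filter.mp hq).2)
        (fun q hq => hle q (Finset.mem_filter.mp hq).1)
    · intro i j hij q hq q' hq'
      rw [Finset.mem_filter] at hq hq'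
      exact (hu.lt_iff_lt hq.1 hq'.1).mp (hord i j hij _ hq.2 _ hq'.2)
    · intro q hq
      rw [← hF] at hq
      exact (hEm _ (hmaps q hq)).trans (PNat.coe_le_coe _ _ |>.mpr (hle q hq))
  | limit l hl ih =>
    rw [schreier_limit hl] at hE ⊢
    rcases hE with rfl | ⟨n, h, hE, hn⟩
    · rw [Finset.eq_empty_of_forall_notMem (s := F) fun q hq => by simpa using hmaps q hq]
      exact Set.mem_insert _ _
    exact Set.mem_insert_of_mem _
      ⟨n, h, ih _ h hE hu hmaps hle, fun q hq => (hn _ (hmaps q hq)).trans (hle q hq)⟩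

theorem mem_schreier_of_interlaces {o : Ordinal} {E G : Finset ℕ+} (hE : E ∈ schreier c o)
    (hbelow : ∀ q ∈ G, ∃ p ∈ E, p < q)
    (hsep : ∀ q ∈ G, ∀ q' ∈ G, q < q' → ∃ p ∈ E, q ≤ p ∧ p < q') : G ∈ schreier c o := by
  -- `u q` is the last point of `E` before `q`
  set u : ℕ+ → ℕ+ := fun q => (E.filter (· < q)).sup id
  have hu : ∀ q ∈ G, u q ∈ E ∧ u q < q := by
    intro q hq
    obtain ⟨p, hp, hpq⟩ := hbelow q hq
    obtain ⟨r, hr, hur⟩ :=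
      Finset.exists_mem_eq_sup (E.filter (· < q)) ⟨p, Finset.mem_filter.mpr ⟨hp, hpq⟩⟩ id
    change (E.filter (· < q)).sup id ∈ E ∧ (E.filter (· < q)).sup id < q
    rw [hur]
    exact Finset.mem_filter.mp hr
  refine mem_schreier_of_strictMonoOn hE (u := u) (fun q hq q' hq' hlt => ?_)
    (fun q hq => (hu q hq).1) (fun q hq => (hu q hq).2.le)
  obtain ⟨p, hp, hqp, hpq'⟩ := hsep q hq q' hq' hlt
  calc u q < q := (hu q hq).2
    _ ≤ p := hqp
    _ ≤ u q' := Finset.le_sup (f := id) (Finset.mem_filter.mpr ⟨hp, hpq'⟩)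

end Schreier

section Blocks

variable {α : Type*} [Preorder α] {B : ℕ → Set α}

theorem blocks_lt_of_succ (hne : ∀ j, (B j).Nonempty)
    (hsucc : ∀ j, ∀ p ∈ B j, ∀ q ∈ B (j + 1), p < q) :
    ∀ j j', j < j' → ∀ p ∈ B j, ∀ q ∈ B j', p < q := by
  intro j j' hjj'
  induction j', hjj' using Nat.le_induction with
  | base => exact hsucc j
  | succ k _ ih =>
    intro p hp q hq
    obtain ⟨r, hr⟩ := hne k
    exact (ih p hp r hr).trans (hsucc k r hr q hq)

theorem strictMono_of_isLeast {m : ℕ → α} (hB : ∀ j j', j < j' → ∀ p ∈ B j, ∀ q ∈ B j', p < q)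
    (hm : ∀ j, IsLeast (B j) (m j)) : StrictMono m :=
  fun j j' h => hB j j' h _ (hm j).1 _ (hm j').1

end Blocks

theorem image_mem_schreier_of_blocks {c : Ordinal → ℕ+ → Ordinal} {o : Ordinal}
    {B : ℕ → Finset ℕ+} (hB : ∀ j j', j < j' → ∀ p ∈ B j, ∀ q ∈ B j', p < q)
    {m : ℕ → ℕ+} (hm : ∀ j, IsLeast (B j : Set ℕ+) (m j)) {E : Finset ℕ+}
    (hE : E ∈ schreier c o) {j₀ : ℕ} (h₀ : (E ∩ B j₀).Nonempty) {s : Finset ℕ}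
    (hs : ∀ j ∈ s, j₀ < j ∧ (E ∩ B j).Nonempty) : s.image m ∈ schreier c o := by
  have hmono := strictMono_of_isLeast (B := fun j => (B j : Set ℕ+)) hB hm
  refine mem_schreier_of_interlaces hE ?_ ?_
  · simp only [Finset.mem_image]
    rintro _ ⟨j, hj, rfl⟩
    obtain ⟨p, hp⟩ := h₀
    rw [Finset.mem_inter] at hp
    exact ⟨p, hp.1, hB _ _ (hs j hj).1 _ hp.2 _ (hm j).1⟩
  · simp only [Finset.mem_image]
    rintro _ ⟨j, hj, rfl⟩ _ ⟨j', -, rfl⟩ hlt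
    obtain ⟨p, hp⟩ := (hs j hj).2
    rw [Finset.mem_inter] at hp
    exact ⟨p, hp.1, (hm j).2 hp.2, hB _ _ (hmono.lt_iff_lt.mp hlt) _ hp.2 _ (hm j').1⟩

section Norm

variable {c : Ordinal → ℕ+ → Ordinal} {o : Ordinal}

theorem schreierNorm_bddAbove (x : ℕ+ →₀ ℝ) :
    BddAbove {r : ℝ | ∃ E ∈ schreier c o, r = ∑ n ∈ E, |x n|} := by
  refine ⟨∑ n ∈ x.support, |x n|, ?_⟩
  rintro _ ⟨E, -, rfl⟩
  calc ∑ n ∈ E, |x n| = ∑ n ∈ E.filter (· ∈ x.support), |x n| :=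
        (Finset.sum_filter_of_ne fun n _ h => by simpa using h).symm
    _ ≤ ∑ n ∈ x.support, |x n| :=
        Finset.sum_le_sum_of_subset_of_nonneg (fun n hn => (Finset.mem_filter.mp hn).2)
          fun _ _ _ => abs_nonneg _

theorem sum_abs_le_schreierNorm {E : Finset ℕ+} (hE : E ∈ schreier c o) (x : ℕ+ →₀ ℝ) :
    ∑ n ∈ E, |x n| ≤ schreierNorm c o x :=
  le_csSup (schreierNorm_bddAbove x) ⟨E, hE, rfl⟩

theorem schreierNorm_nonneg (x : ℕ+ →₀ ℝ) : 0 ≤ schreierNorm c o x := by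
  simpa using sum_abs_le_schreierNorm (empty_mem_schreier (c := c) o) x

theorem schreierNorm_le {x : ℕ+ →₀ ℝ} {b : ℝ}
    (hb : ∀ E ∈ schreier c o, ∑ n ∈ E, |x n| ≤ b) : schreierNorm c o x ≤ b :=
  csSup_le ⟨_, ∅, empty_mem_schreier o, rfl⟩ fun _ ⟨E, hE, hr⟩ => hr ▸ hb E hE

theorem sum_abs_le_schreierNorm_schreierComb {k : ℕ → ℕ+} (hk : Function.Injective k)
    {s : Finset ℕ} (hs : s.image k ∈ schreier c o) (a : ℕ →₀ ℝ) :
    ∑ j ∈ s, |a j| ≤ schreierNorm c o (schreierComb k a) := by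
  have hcomb : ∀ j, schreierComb k a (k j) = a j := Finsupp.mapDomain_apply hk a
  calc ∑ j ∈ s, |a j| = ∑ n ∈ s.image k, |schreierComb k a n| := by
        rw [Finset.sum_image fun i _ j _ h => hk h]; simp only [hcomb]
    _ ≤ _ := sum_abs_le_schreierNorm hs _

end Norm

theorem sum_abs_sum_smul_le {ι κ : Type*} [DecidableEq ι] {E : Finset ι} {x : κ → ι →₀ ℝ}
    (hx : ∀ j, ∑ n ∈ E, |x j n| ≤ 1) (a : κ →₀ ℝ) :
    ∑ n ∈ E, |(a.sum fun j r => r • x j) n| ≤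
      ∑ j ∈ a.support.filter fun j => (E ∩ (x j).support).Nonempty, |a j| := by
  calc ∑ n ∈ E, |(a.sum fun j r => r • x j) n|
      ≤ ∑ n ∈ E, ∑ j ∈ a.support, |a j| * |x j n| := by
        refine Finset.sum_le_sum fun n _ => ?_
        rw [Finsupp.sum_apply, Finsupp.sum]
        simp only [Finsupp.smul_apply, smul_eq_mul, ← abs_mul]
        exact Finset.abs_sum_le_sum_abs _ _
    _ = ∑ j ∈ a.support, |a j| * ∑ n ∈ E, |x j n| := by
        rw [Finset.sum_comm]; simp only [Finset.mul_sum]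
    _ = ∑ j ∈ a.support.filter fun j => (E ∩ (x j).support).Nonempty,
          |a j| * ∑ n ∈ E, |x j n| := by
        refine (Finset.sum_filter_of_ne fun j _ h => ?_).symm
        obtain ⟨n, hn, hxn⟩ := Finset.exists_ne_zero_of_sum_ne_zero (right_ne_zero_of_mul h)
        exact ⟨n, Finset.mem_inter.mpr ⟨hn, Finsupp.mem_support_iff.mpr (abs_ne_zero.mp hxn)⟩⟩
    _ ≤ _ := Finset.sum_le_sum fun j _ => mul_le_of_le_one_right (abs_nonneg _) (hx j)

/-- **Proposition 3.1.** The unit vector basis of the Schreier space `X_α` satisfies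
subsequential `2`-`X_α`-upper block estimates in itself. -/
theorem schreier_upper_block_estimates_self
    (c : Ordinal → ℕ+ → Ordinal) (hc : IsCofinalChoice c)
    (α : Ordinal) (hα : α < Ordinal.omega 1)
    (x : ℕ → ℕ+ →₀ ℝ) (hx0 : ∀ j, x j ≠ 0)
    (hxnorm : ∀ j, schreierNorm c α (x j) = 1)
    (hblock : ∀ j, ∀ p ∈ (x j).support, ∀ q ∈ (x (j + 1)).support, p < q)
    (m : ℕ → ℕ+)
    (hm : ∀ j, m j = (x j).support.min' (Finsupp.support_nonempty_iff.mpr (hx0 j))) :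
    ∀ a : ℕ →₀ ℝ,
      schreierNorm c α (a.sum fun j r => r • x j) ≤
        2 * schreierNorm c α (schreierComb m a) := by
  intro a
  have hleast : ∀ j, IsLeast ((x j).support : Set ℕ+) (m j) := fun j =>
    hm j ▸ Finset.isLeast_min' _ _
  have hB := blocks_lt_of_succ (B := fun j => ((x j).support : Set ℕ+))
    (fun j => Finset.coe_nonempty.mpr (Finsupp.support_nonempty_iff.mpr (hx0 j))) hblock
  have hinj := (strictMono_of_isLeast hB hleast).injective
  refine schreierNorm_le fun E hE => ?_
  have hxE : ∀ j, ∑ n ∈ E, |x j n| ≤ 1 := fun j =>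
    (sum_abs_le_schreierNorm hE _).trans_eq (hxnorm j)
  refine (sum_abs_sum_smul_le hxE a).trans ?_
  set J := a.support.filter fun j => (E ∩ (x j).support).Nonempty
  rcases J.eq_empty_or_nonempty with hJ | hJ
  · simpa [hJ] using schreierNorm_nonneg (schreierComb m a)
  set j₀ := J.min' hJ
  have hmet : ∀ j ∈ J, (E ∩ (x j).support).Nonempty := fun j hj => (Finset.mem_filter.mp hj).2
  rw [← Finset.add_sum_erase _ _ (J.min'_mem hJ), two_mul]
  refine add_le_add ?_ (sum_abs_le_schreierNorm_schreierComb hinj ?_ a)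
  · simpa using sum_abs_le_schreierNorm_schreierComb hinj (s := {j₀})
      (by simpa using singleton_mem_schreier hc hα (m j₀)) a
  · refine image_mem_schreier_of_blocks hB hleast hE (hmet j₀ (J.min'_mem hJ)) fun j hj => ?_
    obtain ⟨hne, hjJ⟩ := Finset.mem_erase.mp hj
    exact ⟨lt_of_le_of_ne (J.min'_le j hjJ) (Ne.symm hne), hmet j hjJ⟩

end
end

section
/- Lemma 5.3: Let X and Z be Banach spaces, let (F_n) be a bimonotone FDD of Z with coordinate projections P_n, and let Q : Z → X be a bounded linear map such that B_X ⊆ Q(C·B_Z) for some C > 0, where B_X and B_Z are the closed unit balls. If (x_n) is a sequence in X with ‖x_n‖ = 1 for all n converging weakly to 0, then for every ε > 0 and every n ∈ ℕ there exist N ∈ ℕ and z ∈ Z with ‖z‖ ≤ 2C, P_{[1,n]} z = 0, and ‖Qz − x_N‖ < ε. -/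
open Filter Topology Metric

noncomputable section

/-! ### Finite dimensional decompositions (indexed by `ℕ`) -/

/-- A finite dimensional decomposition of `Z`: nonzero finite-dimensional subspaces `E n`
such that every `z` has a unique norm-convergent representation `z = Σ_n z_n`, `z_n ∈ E n`,
together with the (automatically continuous) coordinate projections. -/
structure FDD (Z : Type*) [NormedAddCommGroup Z] [NormedSpace ℝ Z] where
  E : ℕ → Submodule ℝ Z
  nontrivial : ∀ n, E n ≠ ⊥
  finiteDim : ∀ n, FiniteDimensional ℝ (E n)
  proj : ℕ → Z →L[ℝ] Z
  proj_mem : ∀ n z, proj n z ∈ E n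
  proj_sum : ∀ z : Z,
    Filter.Tendsto (fun N => ∑ n ∈ Finset.range N, proj n z) Filter.atTop (nhds z)
  rep_unique : ∀ (z : Z) (f : ℕ → Z), (∀ n, f n ∈ E n) →
    Filter.Tendsto (fun N => ∑ n ∈ Finset.range N, f n) Filter.atTop (nhds z) →
    ∀ n, f n = proj n z

namespace FDD

variable {Z : Type*} [NormedAddCommGroup Z] [NormedSpace ℝ Z] (F : FDD Z)

/-- The support of a vector with respect to an FDD. -/
def supp (z : Z) : Set ℕ := {n | F.proj n z ≠ 0}

/-- The minimum of the support. -/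
def minSupp (z : Z) : ℕ := sInf (F.supp z)

/-- The maximum of the support. -/
def maxSupp (z : Z) : ℕ := sSup (F.supp z)

/-- A block sequence with respect to an FDD: nonzero, finitely supported vectors with
successive supports. -/
def IsBlockSeq (z : ℕ → Z) : Prop :=
  (∀ n, z n ≠ 0) ∧ (∀ n, (F.supp (z n)).Finite) ∧
    ∀ n, ∀ i ∈ F.supp (z n), ∀ j ∈ F.supp (z (n + 1)), i < j

/-- Bimonotonicity: all interval projections have norm at most one. -/
def Bimonotone : Prop := ∀ a b : ℕ, ‖∑ i ∈ Finset.Icc a b, F.proj i‖ ≤ 1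

/-- A shrinking FDD. -/
def Shrinking : Prop :=
  ∀ f : Z →L[ℝ] ℝ,
    Filter.Tendsto
      (fun N => ‖f.comp (ContinuousLinearMap.id ℝ Z - ∑ i ∈ Finset.range N, F.proj i)‖)
      Filter.atTop (nhds 0)

/-- A boundedly-complete FDD. -/
def BoundedlyComplete : Prop :=
  ∀ f : ℕ → Z, (∀ n, f n ∈ F.E n) →
    BddAbove (Set.range fun N => ‖∑ n ∈ Finset.range N, f n‖) →
    ∃ z : Z, Filter.Tendsto (fun N => ∑ n ∈ Finset.range N, f n) Filter.atTop (nhds z)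

end FDD

/-- `(x_n)` is `C`-dominated by `(y_n)`. -/
def DominatedBy {X : Type*} {Y : Type*} [NormedAddCommGroup X] [Module ℝ X]
    [NormedAddCommGroup Y] [Module ℝ Y] (C : ℝ) (x : ℕ → X) (y : ℕ → Y) : Prop :=
  ∀ a : ℕ →₀ ℝ, ‖a.sum fun n r => r • x n‖ ≤ C * ‖a.sum fun n r => r • y n‖

/-- Upper block estimates, with constant `C`, with respect to a sequence `w`. -/
def FDD.UpperBlockEst {Z V : Type*} [NormedAddCommGroup Z] [NormedSpace ℝ Z]
    [NormedAddCommGroup V] [Module ℝ V] (F : FDD Z) (w : ℕ → V) (C : ℝ) : Prop :=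
  ∀ z : ℕ → Z, F.IsBlockSeq z → (∀ n, ‖z n‖ = 1) →
    DominatedBy C z fun n => w (F.minSupp (z n))

/-- Lower block estimates, with constant `C`, with respect to a sequence `w`. -/
def FDD.LowerBlockEst {Z V : Type*} [NormedAddCommGroup Z] [NormedSpace ℝ Z]
    [NormedAddCommGroup V] [Module ℝ V] (F : FDD Z) (w : ℕ → V) (C : ℝ) : Prop :=
  ∀ z : ℕ → Z, F.IsBlockSeq z → (∀ n, ‖z n‖ = 1) →
    DominatedBy C (fun n => w (F.minSupp (z n))) z

/-! Lift `x N` to `y N` with `‖y N‖ ≤ C` and split `y N = P y N + w N`, where `P` is the head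
projection onto the first `n` summands. The heads live in a ball of a finite-dimensional space, so
along a subsequence `P y N → a`; then `Q w N → -Q a` weakly, and by Mazur's theorem `-Q a` is a norm
limit of vectors `Q u` with `u` in the convex set `{‖u‖ ≤ C, P u = 0}`, to which every `w N` belongs
by bimonotonicity. Hence `z = w N - u` works for `N` large. -/

theorem Convex.mem_closure_of_forall_tendsto_dual {E ι : Type*} [NormedAddCommGroup E]
    [NormedSpace ℝ E] {s : Set E} (hs : Convex ℝ s) {l : Filter ι} [l.NeBot] {y : ι → E}
    (hy : ∀ᶠ i in l, y i ∈ s) {v : E}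
    (hv : ∀ f : E →L[ℝ] ℝ, Tendsto (fun i => f (y i)) l (𝓝 (f v))) : v ∈ closure s := by
  have hweak : Tendsto (fun i => toWeakSpace ℝ E (y i)) l (𝓝 (toWeakSpace ℝ E v)) :=
    (WeakBilin.tendsto_iff_forall_eval_tendsto _
      (separatingDual_iff_injective.mp inferInstance)).2 hv
  have hmem := mem_closure_of_tendsto hweak (hy.mono fun i => Set.mem_image_of_mem _)
  rw [← hs.toWeakSpace_closure ℝ] at hmem
  simpa using hmem

theorem Submodule.exists_strictMono_tendsto_of_norm_le {E : Type*} [NormedAddCommGroup E]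
    [NormedSpace ℝ E] (S : Submodule ℝ E) [FiniteDimensional ℝ S] {u : ℕ → E}
    (hu : ∀ k, u k ∈ S) {R : ℝ} (hR : ∀ k, ‖u k‖ ≤ R) :
    ∃ a, ∃ φ : ℕ → ℕ, StrictMono φ ∧ Tendsto (u ∘ φ) atTop (𝓝 a) := by
  have hK : IsCompact (((↑) : S → E) '' closedBall 0 R) :=
    (isCompact_closedBall 0 R).image continuous_subtype_val
  obtain ⟨a, -, φ, hφ, hlim⟩ := hK.tendsto_subseq (x := u)
    fun k => ⟨⟨u k, hu k⟩, by simpa using hR k, rfl⟩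
  exact ⟨a, φ, hφ, hlim⟩

theorem exists_norm_le_two_mul_apply_eq_zero_map_sub_lt {X Z : Type*} [NormedAddCommGroup X]
    [NormedSpace ℝ X] [NormedAddCommGroup Z] [NormedSpace ℝ Z] (P : Z →L[ℝ] Z)
    (hPP : ∀ z, P (P z) = P z) [FiniteDimensional ℝ (LinearMap.range (P : Z →ₗ[ℝ] Z))]
    (hP : ∀ z, ‖z - P z‖ ≤ ‖z‖) (Q : Z →L[ℝ] X) {C : ℝ} {y : ℕ → Z} (hy : ∀ N, ‖y N‖ ≤ C)
    (hwn : ∀ f : X →L[ℝ] ℝ, Tendsto (fun N => f (Q (y N))) atTop (𝓝 0)) {ε : ℝ} (hε : 0 < ε) :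
    ∃ N z, ‖z‖ ≤ 2 * C ∧ P z = 0 ∧ ‖Q z - Q (y N)‖ < ε := by
  obtain ⟨a, φ, hφ, ha⟩ := (LinearMap.range (P : Z →ₗ[ℝ] Z)).exists_strictMono_tendsto_of_norm_le
    (u := fun N => P (y N)) (fun N => LinearMap.mem_range_self (P : Z →ₗ[ℝ] Z) (y N))
    (fun N => P.le_opNorm_of_le (hy N))
  set T : Set Z := closedBall 0 C ∩ (LinearMap.ker (P : Z →ₗ[ℝ] Z) : Set Z)
  have hT : ∀ N, y N - P (y N) ∈ T := fun N =>
    ⟨by simpa using (hP (y N)).trans (hy N), by simp [hPP]⟩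
  have hQa : Tendsto (fun k => Q (P (y (φ k)))) atTop (𝓝 (Q a)) := (Q.continuous.tendsto a).comp ha
  -- `Q (y N - P (y N)) = Q (y N) - Q (P (y N))` tends weakly to `-Q a` along `φ`
  have hclosure : -Q a ∈ closure (Q '' T) := by
    refine ((convex_closedBall 0 C).inter (LinearMap.ker (P : Z →ₗ[ℝ] Z)).convex).linear_image
      (Q : Z →ₗ[ℝ] X) |>.mem_closure_of_forall_tendsto_dual (l := atTop)
      (Eventually.of_forall fun k => Set.mem_image_of_mem Q (hT (φ k))) fun f => ?_
    simpa using ((hwn f).comp hφ.tendsto_atTop).sub ((f.continuous.tendsto _).comp hQa)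
  obtain ⟨_, ⟨u, hu, rfl⟩, hu_close⟩ := Metric.mem_closure_iff.1 hclosure (ε / 2) (half_pos hε)
  obtain ⟨k, hk⟩ := Metric.tendsto_atTop.1 hQa (ε / 2) (half_pos hε)
  set w := y (φ k) - P (y (φ k))
  refine ⟨φ k, w - u, ?_, ?_, ?_⟩
  · calc ‖w - u‖ ≤ ‖w‖ + ‖u‖ := norm_sub_le w u
      _ ≤ C + C := add_le_add (by simpa using (hT (φ k)).1) (by simpa using hu.1)
      _ = 2 * C := by ring
  · have hw : P w = 0 := (hT (φ k)).2
    have hu0 : P u = 0 := hu.2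
    rw [map_sub, hw, hu0, sub_zero]
  · calc ‖Q (w - u) - Q (y (φ k))‖ = ‖(-Q a - Q u) - (Q (P (y (φ k))) - Q a)‖ := by
          congr 1
          simp only [w, map_sub]
          abel
      _ ≤ dist (-Q a) (Q u) + dist (Q (P (y (φ k)))) (Q a) := by
          simpa only [dist_eq_norm] using norm_sub_le _ _
      _ < ε / 2 + ε / 2 := add_lt_add hu_close (hk k le_rfl)
      _ = ε := add_halves ε

namespace FDD

variable {Z : Type*} [NormedAddCommGroup Z] [NormedSpace ℝ Z] (F : FDD Z)

def partialSum (n : ℕ) : Z →L[ℝ] Z := ∑ i ∈ Finset.range n, F.proj i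

theorem partialSum_apply (n : ℕ) (z : Z) :
    F.partialSum n z = ∑ i ∈ Finset.range n, F.proj i z :=
  sum_apply _ _ _

theorem proj_proj (i j : ℕ) (z : Z) :
    F.proj i (F.proj j z) = if i = j then F.proj j z else 0 := by
  refine (F.rep_unique (F.proj j z) (fun n => if n = j then F.proj j z else 0) (fun n => ?_)
    (tendsto_atTop_of_eventually_const fun N (hN : j + 1 ≤ N) => ?_) i).symm
  · split_ifs with h
    · exact h ▸ F.proj_mem n z
    · exact zero_mem _
  · simp [Finset.sum_ite_eq', Nat.lt_of_succ_le hN]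

theorem partialSum_partialSum (n : ℕ) (z : Z) :
    F.partialSum n (F.partialSum n z) = F.partialSum n z := by
  simp only [partialSum_apply, map_sum, proj_proj]
  exact Finset.sum_congr rfl fun i hi => by simp [hi]

instance finiteDimensional_range_partialSum (n : ℕ) :
    FiniteDimensional ℝ (LinearMap.range (F.partialSum n : Z →ₗ[ℝ] Z)) := by
  have := F.finiteDim
  refine Submodule.finiteDimensional_of_le (S₂ := (Finset.range n).sup F.E) ?_
  rintro _ ⟨z, rfl⟩
  rw [ContinuousLinearMap.coe_coe, partialSum_apply]
  exact Submodule.sum_mem _ fun i hi => Finset.le_sup (f := F.E) hi (F.proj_mem i z)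

variable {F}

theorem norm_sum_Icc_proj_apply_le (hbm : F.Bimonotone) (a b : ℕ) (z : Z) :
    ‖∑ i ∈ Finset.Icc a b, F.proj i z‖ ≤ ‖z‖ := by
  rw [← sum_apply]
  exact ((∑ i ∈ Finset.Icc a b, F.proj i).le_opNorm z).trans
    (mul_le_of_le_one_left (norm_nonneg z) (hbm a b))

theorem norm_sub_partialSum_apply_le (hbm : F.Bimonotone) (n : ℕ) (z : Z) :
    ‖z - F.partialSum n z‖ ≤ ‖z‖ := by
  have hlim : Tendsto (fun m => F.partialSum (m + 1) z - F.partialSum n z) atTop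
      (𝓝 (z - F.partialSum n z)) := by
    simp only [partialSum_apply]
    exact ((F.proj_sum z).comp (tendsto_add_atTop_nat 1)).sub_const _
  refine le_of_tendsto hlim.norm (eventually_atTop.2 ⟨n, fun m hm => ?_⟩)
  rw [partialSum_apply, partialSum_apply, ← Finset.sum_Ico_eq_sub _ (by omega),
    Finset.Ico_add_one_right_eq_Icc]
  exact norm_sum_Icc_proj_apply_le hbm n m z

end FDD

theorem quotient_skipped_perturbation_general
    {X Z : Type*} [NormedAddCommGroup X] [NormedSpace ℝ X]
    [NormedAddCommGroup Z] [NormedSpace ℝ Z]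
    (F : FDD Z) (hbm : F.Bimonotone)
    (Q : Z →L[ℝ] X) (C : ℝ)
    (hQ : Metric.closedBall (0 : X) 1 ⊆ ⇑Q '' Metric.closedBall (0 : Z) C)
    (x : ℕ → X) (hx : ∀ n, ‖x n‖ = 1)
    (hwn : ∀ f : X →L[ℝ] ℝ, Filter.Tendsto (fun n => f (x n)) Filter.atTop (nhds 0)) :
    ∀ ε : ℝ, 0 < ε → ∀ n : ℕ, ∃ (N : ℕ) (z : Z),
      ‖z‖ ≤ 2 * C ∧ (∑ i ∈ Finset.range n, F.proj i z) = 0 ∧ ‖Q z - x N‖ < ε := by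
  intro ε hε n
  have hlift : ∀ N, ∃ y ∈ closedBall (0 : Z) C, Q y = x N :=
    fun N => hQ (mem_closedBall_zero_iff.2 (hx N).le)
  choose y hyC hQy using hlift
  obtain ⟨N, z, hz, hPz, hQz⟩ := exists_norm_le_two_mul_apply_eq_zero_map_sub_lt (F.partialSum n)
    (F.partialSum_partialSum n) (F.norm_sub_partialSum_apply_le hbm n) Q
    (fun N => mem_closedBall_zero_iff.1 (hyC N)) (by simpa only [hQy] using hwn) hε
  exact ⟨N, z, hz, by rwa [← F.partialSum_apply], by rwa [← hQy]⟩

/-- **Lemma 5.3.** -/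
theorem quotient_skipped_perturbation
    {X Z : Type*} [NormedAddCommGroup X] [NormedSpace ℝ X] [CompleteSpace X]
    [NormedAddCommGroup Z] [NormedSpace ℝ Z] [CompleteSpace Z]
    (F : FDD Z) (hbm : F.Bimonotone)
    (Q : Z →L[ℝ] X) (C : ℝ) (hC : 0 < C)
    (hQ : Metric.closedBall (0 : X) 1 ⊆ ⇑Q '' Metric.closedBall (0 : Z) C)
    (x : ℕ → X) (hx : ∀ n, ‖x n‖ = 1)
    (hwn : ∀ f : X →L[ℝ] ℝ, Filter.Tendsto (fun n => f (x n)) Filter.atTop (nhds 0)) :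
    ∀ ε : ℝ, 0 < ε → ∀ n : ℕ, ∃ (N : ℕ) (z : Z),
      ‖z‖ ≤ 2 * C ∧ (∑ i ∈ Finset.range n, F.proj i z) = 0 ∧ ‖Q z - x N‖ < ε :=
  quotient_skipped_perturbation_general F hbm Q C hQ x hx hwn

end
end
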